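/- Under the discrete-time maximum-consensus update rule x_i[k+1] = x_i[k] + max_{j ∈ N_i ∪ {i}} a_j^(k)·(x_j[k] − x_i[k]), with every weight satisfying δ ≤ a_j^(k) ≤ ā for constants 0 < δ ≤ ā < 1, every node's state converges as k → ∞ to the maximum of the initial states: lim_{k→∞} x_i[k] = max_{1 ≤ j ≤ n} x_j[0] for every node i. -/
import Mathlib


open Filter Topology

/-- Discrete-time maximum consensus: under the update rule
x_i[k+1] = x_i[k] + max_{j ∈ N_i ∪ {i}} a_j^(k)·(x_j[k] − x_i[k]) with all
weights in [δ, ā] for 0 < δ ≤ ā < 1, every node's state converges to the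
maximum of the initial states. -/
theorem dt_maximum_consensus
    (n : ℕ) (hn : 2 ≤ n)
    (G : SimpleGraph (Fin n)) [DecidableRel G.Adj]
    (hconn : G.Connected)
    (x : ℕ → Fin n → ℝ)
    (a : ℕ → Fin n → ℝ)
    (δ abar : ℝ) (hδ : 0 < δ) (hδa : δ ≤ abar) (habar : abar < 1)
    (hbound : ∀ k j, δ ≤ a k j ∧ a k j ≤ abar)
    (hdyn : ∀ i k, x (k + 1) i =
      x k i + (insert i (G.neighborFinset i)).sup'
        (Finset.insert_nonempty i _) (fun j => a k j * (x k j - x k i))) :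
    ∀ i, Tendsto (fun k => x k i) atTop
      (𝓝 (Finset.univ.sup' (Finset.univ_nonempty_iff.mpr ⟨⟨0, by omega⟩⟩)
            (fun j => x 0 j))) := by
  have hne : (Finset.univ : Finset (Fin n)).Nonempty :=
    Finset.univ_nonempty_iff.mpr ⟨⟨0, by omega⟩⟩
  set M : ℝ := Finset.univ.sup' hne (fun j => x 0 j) with hMdef
  -- the sup' term at j = i is zero, so the sup is nonnegative
  have hsup0 : ∀ i k, (0:ℝ) ≤ (insert i (G.neighborFinset i)).sup'
      (Finset.insert_nonempty i _) (fun j => a k j * (x k j - x k i)) := by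
    intro i k
    have := Finset.le_sup' (fun j => a k j * (x k j - x k i))
      (Finset.mem_insert_self i (G.neighborFinset i))
    simpa using this
  -- monotonicity in time
  have hmono : ∀ i, Monotone (fun k => x k i) := by
    intro i
    apply monotone_nat_of_le_succ
    intro k
    have h := hdyn i k
    have h0 := hsup0 i k
    simp only [h]
    linarith
  -- uniform upper bound by M
  have hub : ∀ k i, x k i ≤ M := by
    intro k
    induction k with
    | zero => intro i; exact Finset.le_sup' _ (Finset.mem_univ i)
    | succ k ih =>
      intro i
      rw [hdyn i k]
      have hMi : x k i ≤ M := ih i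
      have hsup : (insert i (G.neighborFinset i)).sup'
          (Finset.insert_nonempty i _) (fun j => a k j * (x k j - x k i))
          ≤ abar * (M - x k i) := by
        apply Finset.sup'_le
        intro j _
        have h1 := (hbound k j).1
        have h2 := (hbound k j).2
        have h3 : x k j ≤ M := ih j
        rcases le_or_gt (x k i) (x k j) with h | h
        · nlinarith
        · nlinarith
      nlinarith
  have hbdd : ∀ i, BddAbove (Set.range fun k => x k i) := by
    intro i
    refine ⟨M, ?_⟩
    rintro _ ⟨k, rfl⟩
    exact hub k i
  set L : Fin n → ℝ := fun i => ⨆ k, x k i with hLdef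
  have htend : ∀ i, Tendsto (fun k => x k i) atTop (𝓝 (L i)) :=
    fun i => tendsto_atTop_ciSup (hmono i) (hbdd i)
  -- adjacency gives limit inequality
  have hkey : ∀ i j, G.Adj i j → L j ≤ L i := by
    intro i j hadj
    have hstep : ∀ k, (1 - δ) * x k i + δ * x k j ≤ x (k + 1) i := by
      intro k
      have hj : j ∈ insert i (G.neighborFinset i) :=
        Finset.mem_insert_of_mem (by simpa using hadj)
      have hle := Finset.le_sup' (fun j => a k j * (x k j - x k i)) hj
      have h0 := hsup0 i k
      rw [hdyn i k]
      have h1 := (hbound k j).1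
      rcases le_or_gt (x k i) (x k j) with h | h
      · nlinarith
      · nlinarith
    have h1 : Tendsto (fun k => (1 - δ) * x k i + δ * x k j) atTop
        (𝓝 ((1 - δ) * L i + δ * L j)) :=
      ((htend i).const_mul _).add ((htend j).const_mul _)
    have h2 : Tendsto (fun k => x (k + 1) i) atTop (𝓝 (L i)) :=
      (htend i).comp (tendsto_add_atTop_nat 1)
    have h3 : (1 - δ) * L i + δ * L j ≤ L i :=
      le_of_tendsto_of_tendsto' h1 h2 hstep
    nlinarith
  -- connectivity gives equality of limits
  have hreach : ∀ i j : Fin n, L i = L j := by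
    intro i j
    obtain ⟨w⟩ := hconn.preconnected i j
    induction w with
    | nil => rfl
    | cons h p ih =>
      exact (le_antisymm (hkey _ _ h.symm) (hkey _ _ h)).trans ih
  -- the node attaining the initial maximum
  obtain ⟨m, _, hm⟩ := Finset.exists_mem_eq_sup' hne (fun j => x 0 j)
  have hLm : L m = M := by
    apply le_antisymm
    · exact ciSup_le fun k => hub k m
    · have : x 0 m ≤ L m := le_ciSup (hbdd m) 0
      rw [hMdef, hm]
      exact this
  intro i
  have hLi : L i = M := (hreach i m).trans hLm
  have := htend i
  rw [hLi] at this
  exact this
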